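/- arXiv:2105.08758 — 3 statements merged into one kernel-verified Lean document; each statement's English description precedes it below -/
import Mathlib

section
/- For any finite simple undirected graph in which every vertex has degree at least 1, the local mean satisfies μ_L = μ_D + (1/(2N))·Σ_{(i,j)∈V×V, i adjacent to j} (D_i − D_j)²/(D_i·D_j), where the sum runs over all ordered pairs of adjacent vertices. -/
open Finset

variable {V : Type*}

/-- Set of neighbors of `v` as a `Finset` (classical). -/
noncomputable def nbr (G : SimpleGraph V) [Fintype V] (v : V) : Finset V :=
  haveI := Classical.decRel G.Adj
  G.neighborFinset v

/-- Degree of vertex `v`: number of its neighbors. -/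
noncomputable def deg (G : SimpleGraph V) [Fintype V] (v : V) : ℕ :=
  (nbr G v).card

/-- Average degree of the friends of `v`. -/
noncomputable def friendAvg (G : SimpleGraph V) [Fintype V] (v : V) : ℝ :=
  (∑ j ∈ nbr G v, (deg G j : ℝ)) / (deg G v : ℝ)

/-- Mean degree of the network. -/
noncomputable def meanDeg (G : SimpleGraph V) [Fintype V] : ℝ :=
  (∑ i : V, (deg G i : ℝ)) / (Fintype.card V : ℝ)

/-- Local mean: average over vertices of the average friend degree. -/
noncomputable def localMean (G : SimpleGraph V) [Fintype V] : ℝ :=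
  (∑ i : V, friendAvg G i) / (Fintype.card V : ℝ)

/-- Global mean: total number of friends of friends over total number of friends. -/
noncomputable def globalMean (G : SimpleGraph V) [Fintype V] : ℝ :=
  (∑ i : V, ∑ j ∈ nbr G i, (deg G j : ℝ)) / (∑ i : V, (deg G i : ℝ))

/-- Number of (undirected) edges. -/
noncomputable def edgeCount (G : SimpleGraph V) [Fintype V] : ℕ :=
  Nat.card G.edgeSet

/-- m-th moment of the degree distribution. -/
noncomputable def kappa (G : SimpleGraph V) [Fintype V] (m : ℤ) : ℝ :=
  (∑ i : V, (deg G i : ℝ) ^ m) / (Fintype.card V : ℝ)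

lemma nbr_mem_iff {V : Type*} [Fintype V] (G : SimpleGraph V) (i j : V) :
    i ∈ nbr G j ↔ j ∈ nbr G i := by
  unfold nbr
  rw [SimpleGraph.mem_neighborFinset, SimpleGraph.mem_neighborFinset]
  exact G.adj_comm j i

lemma swap_sum {V : Type*} [Fintype V] (G : SimpleGraph V) (f : V → V → ℝ) :
    ∑ i : V, ∑ j ∈ nbr G i, f i j = ∑ i : V, ∑ j ∈ nbr G i, f j i := by
  rw [Finset.sum_comm' (s := Finset.univ) (t := fun i => nbr G i)
    (t' := Finset.univ) (s' := fun j => nbr G j)]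
  intro i j
  simp [nbr_mem_iff G i j]

/-- Local mean formula: for a graph in which every vertex has degree at least 1,
`μ_L = μ_D + (1/(2N)) Σ_{(i,j) adjacent} (D_i - D_j)² / (D_i D_j)`, the sum running
over all ordered pairs of adjacent vertices. -/
theorem stmt4 {V : Type*} [Fintype V] [Nonempty V] (G : SimpleGraph V)
    (hdeg : ∀ v : V, 1 ≤ deg G v) :
    localMean G = meanDeg G + (1 / (2 * (Fintype.card V : ℝ))) *
      ∑ i : V, ∑ j ∈ nbr G i,
        ((deg G i : ℝ) - (deg G j : ℝ)) ^ 2 / ((deg G i : ℝ) * (deg G j : ℝ)) := by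
  have hN : (0:ℝ) < (Fintype.card V : ℝ) := by
    exact_mod_cast Fintype.card_pos
  have hD : ∀ v : V, (0:ℝ) < (deg G v : ℝ) := fun v => by
    exact_mod_cast hdeg v
  have hcardnbr : ∀ i : V, ((nbr G i).card : ℝ) = (deg G i : ℝ) := by
    intro i; rfl
  have hpt : ∀ i : V, ∀ j ∈ nbr G i,
      ((deg G i : ℝ) - (deg G j : ℝ)) ^ 2 / ((deg G i : ℝ) * (deg G j : ℝ))
        = (deg G i : ℝ) / (deg G j : ℝ) + (deg G j : ℝ) / (deg G i : ℝ) - 2 := by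
    intro i j _
    field_simp [(hD i).ne', (hD j).ne']
    ring
  have hsum :
      ∑ i : V, ∑ j ∈ nbr G i,
        ((deg G i : ℝ) - (deg G j : ℝ)) ^ 2 / ((deg G i : ℝ) * (deg G j : ℝ))
      = 2 * (∑ i : V, ∑ j ∈ nbr G i, (deg G j : ℝ) / (deg G i : ℝ))
        - 2 * ∑ i : V, (deg G i : ℝ) := by
    have h1 : ∑ i : V, ∑ j ∈ nbr G i,
        ((deg G i : ℝ) - (deg G j : ℝ)) ^ 2 / ((deg G i : ℝ) * (deg G j : ℝ))
        = ∑ i : V, ∑ j ∈ nbr G i,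
          ((deg G i : ℝ) / (deg G j : ℝ) + (deg G j : ℝ) / (deg G i : ℝ) - 2) := by
      exact Finset.sum_congr rfl fun i _ => Finset.sum_congr rfl (hpt i)
    have h2 : ∑ i : V, ∑ j ∈ nbr G i, (deg G i : ℝ) / (deg G j : ℝ)
        = ∑ i : V, ∑ j ∈ nbr G i, (deg G j : ℝ) / (deg G i : ℝ) :=
      swap_sum G (fun i j => (deg G i : ℝ) / (deg G j : ℝ))
    have h3 : ∀ i : V, ∑ j ∈ nbr G i, (2:ℝ) = 2 * (deg G i : ℝ) := by
      intro i
      rw [Finset.sum_const, nsmul_eq_mul, hcardnbr i]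
      ring
    rw [h1]
    simp only [Finset.sum_sub_distrib, Finset.sum_add_distrib]
    rw [h2, Finset.sum_congr rfl (fun i _ => h3 i), ← Finset.mul_sum]
    ring
  have hL : localMean G
      = (∑ i : V, ∑ j ∈ nbr G i, (deg G j : ℝ) / (deg G i : ℝ)) / (Fintype.card V : ℝ) := by
    unfold localMean friendAvg
    congr 1
    exact Finset.sum_congr rfl fun i _ => Finset.sum_div _ _ _
  rw [hL, hsum]
  unfold meanDeg
  field_simp
  ring
end

section
/- Let G be a finite simple undirected graph with at least one edge, every vertex of degree at least 1, and not regular (so σ_O > 0 and σ_ID > 0). Define the inversity ρ = C/(σ_O·σ_ID), where C = (1/(2|E|))·Σ_{(i,j)∈Ê} (D_i − μ_O)·(1/D_j − 1/μ_D) is the covariance, σ_O² and σ_ID² the variances, and μ_O, 1/μ_D the means of the origin and inverse destination degree distributions over directed edges. Then μ_L = μ_G + ρ·√( ((κ₁·κ₃ − κ₂²)/κ₁) · (κ₋₁ − 1/κ₁) ). -/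
open Finset

variable {V : Type*}

/-!
View the directed edges as a uniform probability space carrying the origin degree `O = D_i`
and the inverse destination degree `I = 1 / D_j`. Reversing every directed edge turns
`Σ_i F_i` into `Σ_{(i,j)} D_i / D_j`, so `μ_L = μ_D · E[O I] = μ_D (C + E[O] E[I])`; since
`E[O] = μ_G` and `E[I] = 1 / μ_D`, this is `μ_G + μ_D · C`. Every moment over directed edges is
`E[D_i^m] = κ_{m+1} / κ₁`, which gives `μ_D σ_O σ_ID = √(((κ₁κ₃ - κ₂²)/κ₁)(κ₋₁ - 1/κ₁))`, and
non-regularity makes `σ_O σ_ID` nonzero, so `μ_D · C = ρ · μ_D σ_O σ_ID`.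
-/

section Darts

variable [Fintype V] (G : SimpleGraph V)

lemma mem_nbr {i j : V} : j ∈ nbr G i ↔ G.Adj i j := by
  simp only [nbr, SimpleGraph.mem_neighborFinset]

lemma sum_nbr_comm (f : V → V → ℝ) :
    ∑ i, ∑ j ∈ nbr G i, f i j = ∑ j, ∑ i ∈ nbr G j, f i j :=
  Finset.sum_comm' fun i j => by simp [mem_nbr, G.adj_comm]

lemma sum_nbr_const (g : V → ℝ) :
    ∑ i, ∑ _j ∈ nbr G i, g i = ∑ i, (deg G i : ℝ) * g i := by
  simp [deg, nsmul_eq_mul]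

lemma sum_deg_eq_two_mul_edgeCount : ∑ i, (deg G i : ℝ) = 2 * (edgeCount G : ℝ) := by
  classical
  have hdeg (v : V) : deg G v = G.degree v := by
    unfold deg SimpleGraph.degree nbr
    congr 1
  have hcard : edgeCount G = #G.edgeFinset := by
    rw [edgeCount, Nat.card_eq_fintype_card, SimpleGraph.edgeFinset_card]
  simp only [hdeg, hcard]
  exact_mod_cast G.sum_degrees_eq_twice_card_edges

lemma sum_deg_pos [Nonempty V] (hdeg : ∀ v, 0 < deg G v) : 0 < ∑ i, (deg G i : ℝ) :=
  sum_pos (fun i _ => by exact_mod_cast hdeg i) univ_nonempty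

lemma kappa_one_pos [Nonempty V] (hdeg : ∀ v, 0 < deg G v) : 0 < kappa G 1 := by
  simpa [kappa] using div_pos (sum_deg_pos G hdeg) (by positivity)

lemma edgeCount_ne_zero [Nonempty V] (hdeg : ∀ v, 0 < deg G v) : edgeCount G ≠ 0 := by
  have h := sum_deg_pos G hdeg
  rw [sum_deg_eq_two_mul_edgeCount] at h
  exact_mod_cast (pos_of_mul_pos_right h zero_le_two).ne'

/-- The mean over the directed edge set `Ê` of a function of origin and destination. -/
noncomputable def dartMean (f : V → V → ℝ) : ℝ :=
  (∑ i, ∑ j ∈ nbr G i, f i j) / (2 * (edgeCount G : ℝ))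

noncomputable def dartCov (f g : V → V → ℝ) : ℝ :=
  dartMean G fun i j => (f i j - dartMean G f) * (g i j - dartMean G g)

noncomputable def dartVar (f : V → V → ℝ) : ℝ :=
  dartMean G fun i j => (f i j - dartMean G f) ^ 2

lemma dartVar_nonneg (f : V → V → ℝ) : 0 ≤ dartVar G f :=
  div_nonneg (sum_nonneg fun _ _ => sum_nonneg fun _ _ => sq_nonneg _) (by positivity)

lemma dartMean_swap (f : V → V → ℝ) : dartMean G (fun i j => f j i) = dartMean G f := by
  rw [dartMean, dartMean, sum_nbr_comm]

lemma dartMean_origin (g : V → ℝ) :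
    dartMean G (fun i _ => g i) = (∑ i, (deg G i : ℝ) * g i) / ∑ i, (deg G i : ℝ) := by
  rw [dartMean, sum_nbr_const, sum_deg_eq_two_mul_edgeCount]

lemma dartCov_eq (hG : edgeCount G ≠ 0) (f g : V → V → ℝ) :
    dartCov G f g = dartMean G (fun i j => f i j * g i j) - dartMean G f * dartMean G g := by
  have hE : (2 * edgeCount G : ℝ) ≠ 0 := by positivity
  have hconst (c : ℝ) : ∑ i, ∑ _j ∈ nbr G i, c = 2 * edgeCount G * c := by
    rw [sum_nbr_const, ← sum_mul, sum_deg_eq_two_mul_edgeCount]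
  simp only [dartCov, dartMean, mul_sub, sub_mul, sum_sub_distrib, ← sum_mul, ← mul_sum, hconst]
  field_simp
  ring

lemma dartVar_eq (hG : edgeCount G ≠ 0) (f : V → V → ℝ) :
    dartVar G f = dartMean G (fun i j => f i j ^ 2) - dartMean G f ^ 2 := by
  simpa only [dartCov, dartVar, sq] using dartCov_eq G hG f f

lemma dartMean_origin_zpow [Nonempty V] (hdeg : ∀ v, 0 < deg G v) (m : ℤ) :
    dartMean G (fun i _ => (deg G i : ℝ) ^ m) = kappa G (m + 1) / kappa G 1 := by
  have hN : (Fintype.card V : ℝ) ≠ 0 := by positivity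
  rw [dartMean_origin, kappa, kappa, div_div_div_cancel_right₀ hN]
  congr 1
  · refine sum_congr rfl fun i _ => ?_
    have : (deg G i : ℝ) ≠ 0 := by exact_mod_cast (hdeg i).ne'
    rw [zpow_add_one₀ this, mul_comm]
  · simp

lemma dartMean_dest_zpow [Nonempty V] (hdeg : ∀ v, 0 < deg G v) (m : ℤ) :
    dartMean G (fun _ j => (deg G j : ℝ) ^ m) = kappa G (m + 1) / kappa G 1 := by
  rw [← dartMean_origin_zpow G hdeg, ← dartMean_swap]

lemma kappa_zero [Nonempty V] : kappa G 0 = 1 := by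
  simp [kappa]

lemma meanDeg_eq_kappa_one : meanDeg G = kappa G 1 := by
  simp [meanDeg, kappa]

lemma localMean_eq (hG : edgeCount G ≠ 0) :
    localMean G = meanDeg G * dartMean G (fun i j => (deg G i : ℝ) * (1 / (deg G j : ℝ))) := by
  have hE : (2 * edgeCount G : ℝ) ≠ 0 := by positivity
  have hfriend : ∑ i, friendAvg G i = ∑ i, ∑ j ∈ nbr G i, (deg G j : ℝ) * (1 / (deg G i : ℝ)) :=
    sum_congr rfl fun i _ => by
      rw [friendAvg, sum_div]
      exact sum_congr rfl fun j _ => div_eq_mul_one_div _ _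
  rw [localMean, meanDeg, ← dartMean_swap, dartMean, hfriend, sum_deg_eq_two_mul_edgeCount]
  field_simp

lemma globalMean_eq : globalMean G = dartMean G (fun i _ => (deg G i : ℝ)) := by
  rw [← dartMean_swap, globalMean, dartMean, sum_deg_eq_two_mul_edgeCount]

lemma dartMean_origin_pos (hdeg : ∀ v, 0 < deg G v) {g : V → ℝ} (hg : ∀ v, 0 ≤ g v)
    (hpos : ∃ v, 0 < g v) : 0 < dartMean G (fun i _ => g i) := by
  obtain ⟨v, hv⟩ := hpos
  have hd (i : V) : (0 : ℝ) < deg G i := by exact_mod_cast hdeg i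
  rw [dartMean_origin]
  exact div_pos (sum_pos' (fun i _ => mul_nonneg (hd i).le (hg i)) ⟨v, mem_univ v, mul_pos (hd v) hv⟩)
    (sum_pos (fun i _ => hd i) ⟨v, mem_univ v⟩)

lemma dartMean_origin_deg [Nonempty V] (hdeg : ∀ v, 0 < deg G v) :
    dartMean G (fun i _ => (deg G i : ℝ)) = kappa G 2 / kappa G 1 := by
  simpa using dartMean_origin_zpow G hdeg 1

lemma dartMean_inv_dest [Nonempty V] (hdeg : ∀ v, 0 < deg G v) :
    dartMean G (fun _ j => 1 / (deg G j : ℝ)) = 1 / meanDeg G := by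
  simpa [kappa_zero, meanDeg_eq_kappa_one] using dartMean_dest_zpow G hdeg (-1)

lemma dartVar_origin_eq [Nonempty V] (hdeg : ∀ v, 0 < deg G v) :
    dartVar G (fun i _ => (deg G i : ℝ)) =
      (kappa G 1 * kappa G 3 - kappa G 2 ^ 2) / kappa G 1 ^ 2 := by
  have hsq : dartMean G (fun i _ => (deg G i : ℝ) ^ 2) = kappa G 3 / kappa G 1 := by
    simpa using dartMean_origin_zpow G hdeg 2
  rw [dartVar_eq G (edgeCount_ne_zero G hdeg), hsq, dartMean_origin_deg G hdeg]
  field_simp [(kappa_one_pos G hdeg).ne']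

lemma dartVar_inv_dest_eq [Nonempty V] (hdeg : ∀ v, 0 < deg G v) :
    dartVar G (fun _ j => 1 / (deg G j : ℝ)) = (kappa G (-1) - 1 / kappa G 1) / kappa G 1 := by
  have hsq : dartMean G (fun _ j => (1 / (deg G j : ℝ)) ^ 2) = kappa G (-1) / kappa G 1 := by
    simpa using dartMean_dest_zpow G hdeg (-2)
  rw [dartVar_eq G (edgeCount_ne_zero G hdeg), hsq, dartMean_inv_dest G hdeg, meanDeg_eq_kappa_one]
  field_simp [(kappa_one_pos G hdeg).ne']

lemma exists_deg_ne (hreg : ¬ ∀ v w : V, deg G v = deg G w) (c : ℝ) :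
    ∃ v, (deg G v : ℝ) ≠ c := by
  by_contra! h
  exact hreg fun v w => by exact_mod_cast (h v).trans (h w).symm

lemma dartVar_origin_pos (hdeg : ∀ v, 0 < deg G v) (hreg : ¬ ∀ v w : V, deg G v = deg G w) :
    0 < dartVar G (fun i _ => (deg G i : ℝ)) :=
  dartMean_origin_pos G hdeg (fun _ => sq_nonneg _)
    ((exists_deg_ne G hreg _).imp fun _ hv => sq_pos_iff.mpr (sub_ne_zero.mpr hv))

lemma dartVar_inv_dest_pos (hdeg : ∀ v, 0 < deg G v) (hreg : ¬ ∀ v w : V, deg G v = deg G w) :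
    0 < dartVar G (fun _ j => 1 / (deg G j : ℝ)) := by
  unfold dartVar
  set c := dartMean G fun _ j => 1 / (deg G j : ℝ)
  obtain ⟨v, hv⟩ := exists_deg_ne G hreg (1 / c)
  rw [← dartMean_swap]
  refine dartMean_origin_pos G hdeg (fun _ => sq_nonneg _) ⟨v, sq_pos_iff.mpr (sub_ne_zero.mpr ?_)⟩
  exact fun h => hv (by rw [← h, one_div_one_div])

lemma localMean_eq_globalMean_add_meanDeg_mul_dartCov [Nonempty V] (hdeg : ∀ v, 0 < deg G v) :
    localMean G = globalMean G +
      meanDeg G * dartCov G (fun i _ => (deg G i : ℝ)) (fun _ j => 1 / (deg G j : ℝ)) := by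
  have hG := edgeCount_ne_zero G hdeg
  have hmean : meanDeg G ≠ 0 := (meanDeg_eq_kappa_one G ▸ kappa_one_pos G hdeg).ne'
  rw [dartCov_eq G hG, localMean_eq G hG, globalMean_eq, dartMean_inv_dest G hdeg]
  field_simp
  ring

lemma sqrt_kappa_eq_meanDeg_mul_sqrt_dartVar [Nonempty V] (hdeg : ∀ v, 0 < deg G v) :
    √(((kappa G 1 * kappa G 3 - kappa G 2 ^ 2) / kappa G 1) * (kappa G (-1) - 1 / kappa G 1)) =
      meanDeg G * (√(dartVar G fun i _ => (deg G i : ℝ)) *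
        √(dartVar G fun _ j => 1 / (deg G j : ℝ))) := by
  rw [← Real.sqrt_mul (dartVar_nonneg G _), ← Real.sqrt_sq (show 0 ≤ meanDeg G by
    unfold meanDeg; positivity), ← Real.sqrt_mul (sq_nonneg _), dartVar_origin_eq G hdeg,
    dartVar_inv_dest_eq G hdeg, meanDeg_eq_kappa_one]
  congr 1
  field_simp [(kappa_one_pos G hdeg).ne']

end Darts

theorem stmt10_general {V : Type*} [Fintype V] (G : SimpleGraph V)
    (hdeg : ∀ v : V, 1 ≤ deg G v)
    (hreg : ¬ ∀ v w : V, deg G v = deg G w) :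
    let E2 : ℝ := 2 * (edgeCount G : ℝ)
    let μO : ℝ := kappa G 2 / kappa G 1
    let C : ℝ := (∑ i : V, ∑ j ∈ nbr G i,
        ((deg G i : ℝ) - μO) * (1 / (deg G j : ℝ) - 1 / meanDeg G)) / E2
    let σO : ℝ := Real.sqrt
        ((∑ i : V, ∑ _j ∈ nbr G i, ((deg G i : ℝ) - μO) ^ 2) / E2)
    let σID : ℝ := Real.sqrt
        ((∑ i : V, ∑ j ∈ nbr G i, (1 / (deg G j : ℝ) - 1 / meanDeg G) ^ 2) / E2)
    let ρ : ℝ := C / (σO * σID)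
    localMean G = globalMean G + ρ * Real.sqrt
        (((kappa G 1 * kappa G 3 - (kappa G 2) ^ 2) / kappa G 1) *
          (kappa G (-1) - 1 / kappa G 1)) := by
  intro E2 μO C σO σID ρ
  have : Nonempty V := by
    by_contra h
    exact hreg fun v => (not_nonempty_iff.mp h).elim v
  set O : V → V → ℝ := fun i _ => deg G i
  set I : V → V → ℝ := fun _ j => 1 / deg G j
  have hμO : μO = dartMean G O := (dartMean_origin_deg G hdeg).symm
  have hμI : 1 / meanDeg G = dartMean G I := (dartMean_inv_dest G hdeg).symm
  have hC : C = dartCov G O I := by rw [dartCov, ← hμO, ← hμI]; rfl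
  have hσO : σO = √(dartVar G O) := by rw [dartVar, ← hμO]; rfl
  have hσID : σID = √(dartVar G I) := by rw [dartVar, ← hμI]; rfl
  have hsqrt := sqrt_kappa_eq_meanDeg_mul_sqrt_dartVar G hdeg
  rw [← hσO, ← hσID] at hsqrt
  have hσ : σO * σID ≠ 0 := by
    rw [hσO, hσID]
    exact mul_ne_zero (Real.sqrt_pos.mpr (dartVar_origin_pos G hdeg hreg)).ne'
      (Real.sqrt_pos.mpr (dartVar_inv_dest_pos G hdeg hreg)).ne'
  rw [hsqrt, localMean_eq_globalMean_add_meanDeg_mul_dartCov G hdeg, ← hC]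
  simp only [ρ]
  rw [mul_left_comm, div_mul_cancel₀ _ hσ]

/-- Inversity identity: for a non-regular graph (so `σ_O > 0` and `σ_ID > 0`), with
inversity `ρ = C/(σ_O σ_ID)` where `C` is the covariance between the origin degree
distribution and the inverse destination degree distribution over directed edges,
`μ_L = μ_G + ρ √(((κ₁κ₃ - κ₂²)/κ₁)(κ₋₁ - 1/κ₁))`. -/
theorem stmt10 {V : Type*} [Fintype V] (G : SimpleGraph V) (hE : G.edgeSet.Nonempty)
    (hdeg : ∀ v : V, 1 ≤ deg G v)
    (hreg : ¬ ∀ v w : V, deg G v = deg G w) :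
    let E2 : ℝ := 2 * (edgeCount G : ℝ)
    let μO : ℝ := kappa G 2 / kappa G 1
    let C : ℝ := (∑ i : V, ∑ j ∈ nbr G i,
        ((deg G i : ℝ) - μO) * (1 / (deg G j : ℝ) - 1 / meanDeg G)) / E2
    let σO : ℝ := Real.sqrt
        ((∑ i : V, ∑ _j ∈ nbr G i, ((deg G i : ℝ) - μO) ^ 2) / E2)
    let σID : ℝ := Real.sqrt
        ((∑ i : V, ∑ j ∈ nbr G i, (1 / (deg G j : ℝ) - 1 / meanDeg G) ^ 2) / E2)
    let ρ : ℝ := C / (σO * σID)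
    localMean G = globalMean G + ρ * Real.sqrt
        (((kappa G 1 * kappa G 3 - (kappa G 2) ^ 2) / kappa G 1) *
          (kappa G (-1) - 1 / kappa G 1)) :=
  stmt10_general G hdeg hreg
end

section
/- Let G=(V,E) be a finite simple undirected graph with N > 3 vertices in which every vertex has degree at least 1, containing four distinct vertices a,b,c,d with edges {a,b},{c,d} ∈ E and non-edges {a,d},{b,c} ∉ E, and whose degrees satisfy D_a < D_c and D_b < D_d. Let G' = (V,E') be the rewired graph with E' = (E \ {{a,b},{c,d}}) ∪ {{a,d},{b,c}}. Then the local mean strictly increases: μ_L(G') > μ_L(G). -/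
open Finset

variable {V : Type*}

lemma mem_nbr_s13 {V : Type*} [Fintype V] (G : SimpleGraph V) (v x : V) :
    x ∈ nbr G v ↔ G.Adj v x := by
  simp [nbr]

lemma card_insert_erase {V : Type*} [DecidableEq V] {s : Finset V} {b d : V}
    (hb : b ∈ s) (hd : d ∉ s) : (insert d (s.erase b)).card = s.card := by
  rw [Finset.card_insert_of_notMem (by simp only [Finset.mem_erase]; tauto),
    Finset.card_erase_of_mem hb]
  have : 1 ≤ s.card := Finset.card_pos.mpr ⟨b, hb⟩
  omega

lemma sum_insert_erase {V : Type*} [DecidableEq V] {s : Finset V} {b d : V}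
    (hb : b ∈ s) (hd : d ∉ s) (f : V → ℝ) :
    ∑ x ∈ insert d (s.erase b), f x = ∑ x ∈ s, f x + f d - f b := by
  rw [Finset.sum_insert (by simp only [Finset.mem_erase]; tauto),
    Finset.sum_erase_eq_sub hb]
  ring


set_option maxHeartbeats 2000000 in
/-- Rewiring theorem: if `G` (with `N > 3` vertices, all degrees at least 1) contains
edges `{a,b}, {c,d}` and non-edges `{a,d}, {b,c}` on four distinct vertices with
`D_a < D_c` and `D_b < D_d`, then replacing `{a,b}, {c,d}` by `{a,d}, {b,c}` strictly
increases the local mean. -/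
theorem stmt13 {V : Type*} [Fintype V] (G : SimpleGraph V)
    (hN : 3 < Fintype.card V) (hdeg : ∀ v : V, 1 ≤ deg G v)
    (a b c d : V)
    (hab : a ≠ b) (hac : a ≠ c) (had : a ≠ d) (hbc : b ≠ c) (hbd : b ≠ d) (hcd : c ≠ d)
    (hEab : G.Adj a b) (hEcd : G.Adj c d) (hNad : ¬ G.Adj a d) (hNbc : ¬ G.Adj b c)
    (hdac : deg G a < deg G c) (hdbd : deg G b < deg G d) :
    localMean G <
      localMean (SimpleGraph.fromEdgeSet
        ((G.edgeSet \ {s(a, b), s(c, d)}) ∪ {s(a, d), s(b, c)})) := by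
  classical
  set G' := SimpleGraph.fromEdgeSet
      ((G.edgeSet \ {s(a, b), s(c, d)}) ∪ {s(a, d), s(b, c)}) with hG'
  have hadj : ∀ x y : V, G'.Adj x y ↔
      ((G.Adj x y ∧ ¬(x = a ∧ y = b ∨ x = b ∧ y = a) ∧ ¬(x = c ∧ y = d ∨ x = d ∧ y = c))
        ∨ (x = a ∧ y = d ∨ x = d ∧ y = a) ∨ (x = b ∧ y = c ∨ x = c ∧ y = b)) := by
    intro x y
    rw [hG', SimpleGraph.fromEdgeSet_adj]
    simp only [Set.mem_union, Set.mem_diff, SimpleGraph.mem_edgeSet, Set.mem_insert_iff,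
      Set.mem_singleton_iff, Sym2.eq_iff, not_or]
    constructor
    · rintro ⟨h, _⟩; exact h
    · intro h
      refine ⟨h, ?_⟩
      rcases h with ⟨h, _⟩ | (⟨rfl, rfl⟩ | ⟨rfl, rfl⟩) | (⟨rfl, rfl⟩ | ⟨rfl, rfl⟩)
      · exact h.ne
      · exact had
      · exact had.symm
      · exact hbc
      · exact hbc.symm
  clear hG'
  clear_value G'
  have hba := hab.symm; have hca := hac.symm; have hda := had.symm
  have hcb := hbc.symm; have hdb := hbd.symm; have hdc := hcd.symm
  have hnA : nbr G' a = insert d ((nbr G a).erase b) := by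
    ext x
    rw [mem_nbr_s13, hadj]
    simp only [Finset.mem_insert, Finset.mem_erase, mem_nbr_s13]
    constructor
    · rintro (⟨h1, h2, h3⟩ | (⟨_, rfl⟩ | ⟨rfl, _⟩) | (⟨rfl, _⟩ | ⟨rfl, _⟩)) <;> tauto
    · rintro (rfl | ⟨hxb, hax⟩)
      · tauto
      · exact Or.inl ⟨hax, by tauto, by rintro (⟨rfl, _⟩ | ⟨rfl, _⟩) <;> tauto⟩
  have hnB : nbr G' b = insert c ((nbr G b).erase a) := by
    ext x
    rw [mem_nbr_s13, hadj]
    simp only [Finset.mem_insert, Finset.mem_erase, mem_nbr_s13]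
    constructor
    · rintro (⟨h1, h2, h3⟩ | (⟨rfl, _⟩ | ⟨rfl, _⟩) | (⟨_, rfl⟩ | ⟨rfl, _⟩)) <;> tauto
    · rintro (rfl | ⟨hxa, hbx⟩)
      · tauto
      · exact Or.inl ⟨hbx, by tauto, by rintro (⟨rfl, _⟩ | ⟨rfl, _⟩) <;> tauto⟩
  have hnC : nbr G' c = insert b ((nbr G c).erase d) := by
    ext x
    rw [mem_nbr_s13, hadj]
    simp only [Finset.mem_insert, Finset.mem_erase, mem_nbr_s13]
    constructor
    · rintro (⟨h1, h2, h3⟩ | (⟨rfl, _⟩ | ⟨rfl, _⟩) | (⟨rfl, _⟩ | ⟨_, rfl⟩)) <;> tauto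
    · rintro (rfl | ⟨hxd, hcx⟩)
      · tauto
      · exact Or.inl ⟨hcx, by rintro (⟨rfl, _⟩ | ⟨rfl, _⟩) <;> tauto, by tauto⟩
  have hnD : nbr G' d = insert a ((nbr G d).erase c) := by
    ext x
    rw [mem_nbr_s13, hadj]
    simp only [Finset.mem_insert, Finset.mem_erase, mem_nbr_s13]
    constructor
    · rintro (⟨h1, h2, h3⟩ | (⟨rfl, _⟩ | ⟨_, rfl⟩) | (⟨rfl, _⟩ | ⟨rfl, _⟩)) <;> tauto
    · rintro (rfl | ⟨hxc, hdx⟩)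
      · tauto
      · exact Or.inl ⟨hdx, by rintro (⟨rfl, _⟩ | ⟨rfl, _⟩) <;> tauto, by tauto⟩
  have hnO : ∀ v : V, v ≠ a → v ≠ b → v ≠ c → v ≠ d → nbr G' v = nbr G v := by
    intro v hva hvb hvc hvd
    ext x
    rw [mem_nbr_s13, hadj]
    simp only [mem_nbr_s13]
    constructor
    · rintro (⟨h1, _, _⟩ | (⟨rfl, _⟩ | ⟨rfl, _⟩) | (⟨rfl, _⟩ | ⟨rfl, _⟩)) <;> tauto
    · intro h
      exact Or.inl ⟨h, by rintro (⟨rfl, _⟩ | ⟨rfl, _⟩) <;> tauto,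
        by rintro (⟨rfl, _⟩ | ⟨rfl, _⟩) <;> tauto⟩
  have hmab : b ∈ nbr G a := (mem_nbr_s13 G a b).mpr hEab
  have hmba : a ∈ nbr G b := (mem_nbr_s13 G b a).mpr hEab.symm
  have hmcd : d ∈ nbr G c := (mem_nbr_s13 G c d).mpr hEcd
  have hmdc : c ∈ nbr G d := (mem_nbr_s13 G d c).mpr hEcd.symm
  have hmad : d ∉ nbr G a := fun h => hNad ((mem_nbr_s13 G a d).mp h)
  have hmda : a ∉ nbr G d := fun h => hNad (((mem_nbr_s13 G d a).mp h).symm)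
  have hmbc : c ∉ nbr G b := fun h => hNbc ((mem_nbr_s13 G b c).mp h)
  have hmcb : b ∉ nbr G c := fun h => hNbc (((mem_nbr_s13 G c b).mp h).symm)
  have hdeg' : ∀ v : V, deg G' v = deg G v := by
    intro v
    by_cases hva : v = a
    · subst hva; rw [deg, hnA, card_insert_erase hmab hmad]; rfl
    · by_cases hvb : v = b
      · subst hvb; rw [deg, hnB, card_insert_erase hmba hmbc]; rfl
      · by_cases hvc : v = c
        · subst hvc; rw [deg, hnC, card_insert_erase hmcd hmcb]; rfl
        · by_cases hvd : v = d
          · subst hvd; rw [deg, hnD, card_insert_erase hmdc hmda]; rfl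
          · rw [deg, hnO v hva hvb hvc hvd]; rfl
  -- friendAvg manipulation
  have hsumdeg : ∀ s : Finset V, ∑ j ∈ s, (deg G' j : ℝ) = ∑ j ∈ s, (deg G j : ℝ) := by
    intro s; exact Finset.sum_congr rfl fun j _ => by rw [hdeg' j]
  set A := (deg G a : ℝ) with hA
  set B := (deg G b : ℝ) with hB
  set C := (deg G c : ℝ) with hC
  set D := (deg G d : ℝ) with hD
  have hFa : friendAvg G' a = friendAvg G a + (D - B) / A := by
    rw [friendAvg, friendAvg, hdeg' a, hnA, hsumdeg, sum_insert_erase hmab hmad]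
    rw [show (∑ j ∈ nbr G a, (deg G j : ℝ)) + D - B
        = (∑ j ∈ nbr G a, (deg G j : ℝ)) + (D - B) by ring, add_div]
  have hFb : friendAvg G' b = friendAvg G b + (C - A) / B := by
    rw [friendAvg, friendAvg, hdeg' b, hnB, hsumdeg, sum_insert_erase hmba hmbc]
    rw [show (∑ j ∈ nbr G b, (deg G j : ℝ)) + C - A
        = (∑ j ∈ nbr G b, (deg G j : ℝ)) + (C - A) by ring, add_div]
  have hFc : friendAvg G' c = friendAvg G c + (B - D) / C := by
    rw [friendAvg, friendAvg, hdeg' c, hnC, hsumdeg, sum_insert_erase hmcd hmcb]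
    rw [show (∑ j ∈ nbr G c, (deg G j : ℝ)) + B - D
        = (∑ j ∈ nbr G c, (deg G j : ℝ)) + (B - D) by ring, add_div]
  have hFd : friendAvg G' d = friendAvg G d + (A - C) / D := by
    rw [friendAvg, friendAvg, hdeg' d, hnD, hsumdeg, sum_insert_erase hmdc hmda]
    rw [show (∑ j ∈ nbr G d, (deg G j : ℝ)) + A - C
        = (∑ j ∈ nbr G d, (deg G j : ℝ)) + (A - C) by ring, add_div]
  have hFo : ∀ v : V, v ≠ a → v ≠ b → v ≠ c → v ≠ d → friendAvg G' v = friendAvg G v := by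
    intro v hva hvb hvc hvd
    rw [friendAvg, friendAvg, hdeg' v, hnO v hva hvb hvc hvd, hsumdeg]
  set Δ : ℝ := (D - B) / A + (C - A) / B + (B - D) / C + (A - C) / D with hΔ
  have hsum : ∑ i : V, friendAvg G' i = (∑ i : V, friendAvg G i) + Δ := by
    have h1 : ∑ i : V, (friendAvg G' i - friendAvg G i)
        = ∑ i ∈ ({a, b, c, d} : Finset V), (friendAvg G' i - friendAvg G i) := by
      refine (Finset.sum_subset (Finset.subset_univ _) ?_).symm
      intro i _ hi
      simp only [Finset.mem_insert, Finset.mem_singleton, not_or] at hi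
      rw [hFo i hi.1 hi.2.1 hi.2.2.1 hi.2.2.2, sub_self]
    have h2 : ∑ i ∈ ({a, b, c, d} : Finset V), (friendAvg G' i - friendAvg G i) = Δ := by
      rw [show ({a, b, c, d} : Finset V) = insert a (insert b (insert c {d})) from rfl]
      rw [Finset.sum_insert (by simp [hab, hac, had]),
        Finset.sum_insert (by simp [hbc, hbd]),
        Finset.sum_insert (by simp [hcd]), Finset.sum_singleton]
      rw [hFa, hFb, hFc, hFd, hΔ]; ring
    have := h1.trans h2
    rw [Finset.sum_sub_distrib] at this
    linarith
  have hA1 : (1 : ℝ) ≤ A := by rw [hA]; exact_mod_cast hdeg a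
  have hB1 : (1 : ℝ) ≤ B := by rw [hB]; exact_mod_cast hdeg b
  have hC1 : (1 : ℝ) ≤ C := by rw [hC]; exact_mod_cast hdeg c
  have hD1 : (1 : ℝ) ≤ D := by rw [hD]; exact_mod_cast hdeg d
  have hAC : A < C := by rw [hA, hC]; exact_mod_cast hdac
  have hBD : B < D := by rw [hB, hD]; exact_mod_cast hdbd
  have hA0 : (0 : ℝ) < A := by linarith
  have hB0 : (0 : ℝ) < B := by linarith
  have hC0 : (0 : ℝ) < C := by linarith
  have hD0 : (0 : ℝ) < D := by linarith
  have hΔpos : 0 < Δ := by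
    have hkey : Δ = ((C - A) * (D - B) * (B * D + A * C)) / (A * B * C * D) := by
      rw [hΔ]; field_simp; ring
    rw [hkey]
    apply div_pos
    · apply mul_pos (mul_pos (by linarith) (by linarith))
      nlinarith
    · positivity
  have hNpos : (0 : ℝ) < (Fintype.card V : ℝ) := by
    have : 0 < Fintype.card V := by omega
    exact_mod_cast this
  rw [localMean, localMean]
  have hlt : (∑ i : V, friendAvg G i) < ∑ i : V, friendAvg G' i := by
    rw [hsum]; linarith
  gcongr
end
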